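/- For an LMP τ : S → (D S)^A, the ε-distance d*(s,t) = inf {ε | s ∼_ε t} is the greatest fixpoint of Δ_LP (with respect to the pointwise order on pseudometrics where smaller values are larger in the fixpoint order). -/

import Mathlib

open scoped ENNReal Classical

noncomputable section

def mass {S : Type*} (φ : S → ℝ≥0∞) (X : Set S) : ℝ≥0∞ := ∑' x : X, φ x

def IsSubdist {S : Type*} (φ : S → ℝ≥0∞) : Prop := mass φ Set.univ ≤ 1

def IsPseudometric {S : Type*} (d : S → S → ℝ≥0∞) : Prop :=
  (∀ x, d x x = 0) ∧ (∀ x y, d x y = d y x) ∧ (∀ x y z, d x z ≤ d x y + d y z)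

def Bounded1 {S : Type*} (d : S → S → ℝ≥0∞) : Prop := ∀ x y, d x y ≤ 1

def eball {S : Type*} (d : S → S → ℝ≥0∞) (X : Set S) (ε : ℝ≥0∞) : Set S :=
  {y | ∃ x ∈ X, d x y < ε}

def LP {S : Type*} (d : S → S → ℝ≥0∞) (μ ν : S → ℝ≥0∞) : ℝ≥0∞ :=
  sInf {ε | ∀ X : Set S,
    mass μ X ≤ mass ν (eball d X ε) + ε ∧ mass ν X ≤ mass μ (eball d X ε) + ε}

def relImg {S : Type*} (R : S → S → Prop) (X : Set S) : Set S := {y | ∃ x ∈ X, R x y}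

def IsEpsBisim {S A : Type*} (τ : A → S → S → ℝ≥0∞) (ε : ℝ≥0∞) (R : S → S → Prop) : Prop :=
  Symmetric R ∧ ∀ s t, R s t → ∀ a : A, ∀ X : Set S,
    mass (τ a s) X ≤ mass (τ a t) (relImg R X) + ε

def EpsBisimilar {S A : Type*} (τ : A → S → S → ℝ≥0∞) (ε : ℝ≥0∞) (s t : S) : Prop :=
  ∃ R, IsEpsBisim τ ε R ∧ R s t

def dstar {S A : Type*} (τ : A → S → S → ℝ≥0∞) (s t : S) : ℝ≥0∞ :=
  sInf {ε | ε ≤ 1 ∧ EpsBisimilar τ ε s t}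

def DeltaLP {S A : Type*} (τ : A → S → S → ℝ≥0∞) (d : S → S → ℝ≥0∞) (s₀ s₁ : S) : ℝ≥0∞ :=
  ⨆ a : A, LP d (τ a s₀) (τ a s₁)

/-!
An ε-bisimulation `R` with `ε ≤ 1` relates only states at `d*`-distance at most `ε`, so it moves
mass into `d*`-balls of any radius above `ε`: this gives `Δ_LP(d*) ≤ d*`. Conversely, let `d` be
symmetric with `Δ_LP(d) ≤ d`, and `Δ_LP(d)(s, t) < ε`. The relation `d < ε`, enlarged by the pair
`(s, t)` and its reverse, is an ε-bisimulation, since ε-balls of `d` lie in its image. Hence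
`d* ≤ Δ_LP(d)`; for `d = d*` this is the reverse inequality, and for a fixpoint `d` it is `d* ≤ d`.
-/

section

variable {S A : Type*}

lemma mass_mono (φ : S → ℝ≥0∞) {X Y : Set S} (h : X ⊆ Y) : mass φ X ≤ mass φ Y :=
  ENNReal.summable.tsum_le_tsum_of_inj (Set.inclusion h) (Set.inclusion_injective h)
    (fun _ _ => zero_le) (fun _ => le_rfl) ENNReal.summable

lemma eball_mono (d : S → S → ℝ≥0∞) (X : Set S) {ε₁ ε₂ : ℝ≥0∞} (h : ε₁ ≤ ε₂) :
    eball d X ε₁ ⊆ eball d X ε₂ :=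
  fun _ ⟨x, hx, hd⟩ => ⟨x, hx, hd.trans_le h⟩

lemma mass_le_of_LP_lt {d : S → S → ℝ≥0∞} {μ ν : S → ℝ≥0∞} {ε : ℝ≥0∞} (h : LP d μ ν < ε)
    (X : Set S) : mass μ X ≤ mass ν (eball d X ε) + ε ∧ mass ν X ≤ mass μ (eball d X ε) + ε := by
  obtain ⟨ε₁, hε₁, hlt⟩ := sInf_lt_iff.mp h
  exact ⟨(hε₁ X).1.trans (add_le_add (mass_mono ν (eball_mono d X hlt.le)) hlt.le),
    (hε₁ X).2.trans (add_le_add (mass_mono μ (eball_mono d X hlt.le)) hlt.le)⟩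

lemma LP_comm (d : S → S → ℝ≥0∞) (μ ν : S → ℝ≥0∞) : LP d μ ν = LP d ν μ := by
  unfold LP
  simp only [and_comm]

lemma LP_le_DeltaLP (τ : A → S → S → ℝ≥0∞) (d : S → S → ℝ≥0∞) (a : A) (s t : S) :
    LP d (τ a s) (τ a t) ≤ DeltaLP τ d s t :=
  le_iSup (fun a => LP d (τ a s) (τ a t)) a

lemma EpsBisimilar.symm {τ : A → S → S → ℝ≥0∞} {ε : ℝ≥0∞} {s t : S}
    (h : EpsBisimilar τ ε s t) : EpsBisimilar τ ε t s :=
  let ⟨R, hR, hst⟩ := h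
  ⟨R, hR, hR.1 hst⟩

lemma dstar_comm (τ : A → S → S → ℝ≥0∞) (s t : S) : dstar τ s t = dstar τ t s := by
  unfold dstar
  congr 1
  ext ε
  exact and_congr_right fun _ => ⟨EpsBisimilar.symm, EpsBisimilar.symm⟩

lemma isEpsBisim_top (τ : A → S → S → ℝ≥0∞) (hτ : ∀ a s, IsSubdist (τ a s)) :
    IsEpsBisim τ 1 fun _ _ => True :=
  ⟨fun _ _ _ => trivial, fun x _ _ a X =>
    ((mass_mono (τ a x) (Set.subset_univ X)).trans (hτ a x)).trans le_add_self⟩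

lemma dstar_le_of_isEpsBisim {τ : A → S → S → ℝ≥0∞} {ε : ℝ≥0∞} {R : S → S → Prop}
    (hε : ε ≤ 1) (hR : IsEpsBisim τ ε R) {s t : S} (hst : R s t) : dstar τ s t ≤ ε :=
  sInf_le ⟨hε, R, hR, hst⟩

lemma dstar_le_of_forall_lt (τ : A → S → S → ℝ≥0∞) (hτ : ∀ a s, IsSubdist (τ a s))
    {s t : S} {c : ℝ≥0∞} (h : ∀ ε, c < ε → EpsBisimilar τ ε s t) : dstar τ s t ≤ c := by
  refine le_of_forall_gt_imp_ge_of_dense fun ε hε => ?_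
  rcases le_total ε 1 with hε1 | hε1
  · exact sInf_le ⟨hε1, h ε hε⟩
  · exact (dstar_le_of_isEpsBisim le_rfl (isEpsBisim_top τ hτ) trivial).trans hε1

lemma LP_dstar_le_of_isEpsBisim {τ : A → S → S → ℝ≥0∞} {ε : ℝ≥0∞} {R : S → S → Prop}
    (hε : ε ≤ 1) (hR : IsEpsBisim τ ε R) {s t : S} (hst : R s t) (a : A) :
    LP (dstar τ) (τ a s) (τ a t) ≤ ε := by
  refine le_of_forall_gt_imp_ge_of_dense fun ε' hε' => sInf_le fun X => ?_
  have hR_sub : relImg R X ⊆ eball (dstar τ) X ε' := fun _ ⟨x, hx, hxy⟩ =>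
    ⟨x, hx, (dstar_le_of_isEpsBisim hε hR hxy).trans_lt hε'⟩
  exact ⟨(hR.2 s t hst a X).trans (add_le_add (mass_mono _ hR_sub) hε'.le),
    (hR.2 t s (hR.1 hst) a X).trans (add_le_add (mass_mono _ hR_sub) hε'.le)⟩

lemma DeltaLP_dstar_le (τ : A → S → S → ℝ≥0∞) : DeltaLP τ (dstar τ) ≤ dstar τ :=
  fun _ _ => iSup_le fun a => le_sInf fun _ ⟨hε, _, hR, hst⟩ =>
    LP_dstar_le_of_isEpsBisim hε hR hst a

lemma isEpsBisim_of_LP_lt {τ : A → S → S → ℝ≥0∞} {d : S → S → ℝ≥0∞} {ε : ℝ≥0∞}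
    {R : S → S → Prop} (hR : Symmetric R) (hdR : ∀ x y, d x y < ε → R x y)
    (hLP : ∀ x y, R x y → ∀ a, LP d (τ a x) (τ a y) < ε) : IsEpsBisim τ ε R := by
  refine ⟨hR, fun x y hxy a X => ?_⟩
  have hball : eball d X ε ⊆ relImg R X := fun _ ⟨x', hx', hd⟩ => ⟨x', hx', hdR x' _ hd⟩
  exact (mass_le_of_LP_lt (hLP x y hxy a) X).1.trans (add_le_add (mass_mono _ hball) le_rfl)

lemma epsBisimilar_of_DeltaLP_lt {τ : A → S → S → ℝ≥0∞} {d : S → S → ℝ≥0∞}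
    (hd : ∀ x y, d x y = d y x) (hΔ : DeltaLP τ d ≤ d) {ε : ℝ≥0∞} {s t : S}
    (hst : DeltaLP τ d s t < ε) : EpsBisimilar τ ε s t := by
  let R : S → S → Prop := fun x y => d x y < ε ∨ (x = s ∧ y = t) ∨ (x = t ∧ y = s)
  have hR : Symmetric R := by
    rintro x y (h | ⟨rfl, rfl⟩ | ⟨rfl, rfl⟩)
    · exact Or.inl (hd x y ▸ h)
    · exact Or.inr (Or.inr ⟨rfl, rfl⟩)
    · exact Or.inr (Or.inl ⟨rfl, rfl⟩)
  have hLP : ∀ x y, R x y → ∀ a, LP d (τ a x) (τ a y) < ε := by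
    rintro x y (h | ⟨rfl, rfl⟩ | ⟨rfl, rfl⟩) a
    · exact ((LP_le_DeltaLP τ d a x y).trans (hΔ x y)).trans_lt h
    · exact (LP_le_DeltaLP τ d a x y).trans_lt hst
    · exact LP_comm d _ _ ▸ (LP_le_DeltaLP τ d a y x).trans_lt hst
  exact ⟨R, isEpsBisim_of_LP_lt hR (fun _ _ => Or.inl) hLP, Or.inr (Or.inl ⟨rfl, rfl⟩)⟩

lemma dstar_le_DeltaLP (τ : A → S → S → ℝ≥0∞) (hτ : ∀ a s, IsSubdist (τ a s))
    {d : S → S → ℝ≥0∞} (hd : ∀ x y, d x y = d y x) (hΔ : DeltaLP τ d ≤ d) :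
    dstar τ ≤ DeltaLP τ d :=
  fun _ _ => dstar_le_of_forall_lt τ hτ fun _ => epsBisimilar_of_DeltaLP_lt hd hΔ

end

theorem stmt9 {S A : Type*} (τ : A → S → S → ℝ≥0∞) (hτ : ∀ a s, IsSubdist (τ a s)) :
    DeltaLP τ (dstar τ) = dstar τ ∧
    ∀ d : S → S → ℝ≥0∞, IsPseudometric d → DeltaLP τ d = d →
      ∀ s t : S, dstar τ s t ≤ d s t := by
  refine ⟨le_antisymm (DeltaLP_dstar_le τ)
    (dstar_le_DeltaLP τ hτ (dstar_comm τ) (DeltaLP_dstar_le τ)), ?_⟩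
  intro d hd hfix s t
  have h := dstar_le_DeltaLP τ hτ hd.2.1 hfix.le s t
  rwa [hfix] at h
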